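/- Define, on the open set Ω = {(ξ,τ) ∈ ℝ² : 4 + 2ξ + 2τ > 0 and 4 + 2ξ − 2τ > 0}, the functions u₁(ξ,τ) = ((5ξ − 5τ + 10)√(4+2ξ+2τ) − (8+4ξ)√(4+2ξ−2τ))/(2√(4+2ξ−2τ)) and u₂(ξ,τ) = ((3τ − 3ξ − 6)√(4+2ξ+2τ) + 8√(4+2ξ−2τ))/(2√(4+2ξ−2τ)). Then (u₁,u₂) satisfies the spacetime wave map system ∂²u₁/∂τ² − ∂²u₁/∂ξ² = (1/(2u₁))((∂u₁/∂τ)² + (∂u₂/∂τ)² − (∂u₁/∂ξ)² − (∂u₂/∂ξ)²), ∂²u₂/∂τ² − ∂²u₂/∂ξ² = (1/u₁)((∂u₁/∂τ)(∂u₂/∂τ) − (∂u₁/∂ξ)(∂u₂/∂ξ)) at every point of Ω where u₁ ≠ 0, and satisfies the real-analytic initial conditions u₁(ξ,0) = 1 + ξ/2, u₂(ξ,0) = 1 − (3/2)ξ, ∂u₁/∂τ(ξ,0) = 0, ∂u₂/∂τ(ξ,0) = 0 for all ξ > −2. -/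

import Mathlib

/-! On `Ω` the product `√(4 + 2ξ + 2τ) √(4 + 2ξ − 2τ)` is `ρ = √((4 + 2ξ)² − 4τ²)`, and the
solution is affine in `ρ` and `ξ`: `u₁ = (5/4)ρ − 2ξ − 4`, `u₂ = 4 − (3/4)ρ`. For any
`c ρ + d ξ + e` the wave operator `∂²_τ − ∂²_ξ` gives `−4c/ρ`, and all first derivatives are
rational in `ρ, ξ, τ`, so both equations become rational identities modulo
`ρ² = (4 + 2ξ)² − 4τ²`. On `τ = 0` we have `ρ = 4 + 2ξ` and `∂_τ ρ = 0`. -/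

/-- Partial derivative with respect to the first variable `ξ`. -/
noncomputable def pdXi (f : ℝ × ℝ → ℝ) (p : ℝ × ℝ) : ℝ :=
  deriv (fun x => f (x, p.2)) p.1

/-- Partial derivative with respect to the second variable `τ`. -/
noncomputable def pdTau (f : ℝ × ℝ → ℝ) (p : ℝ × ℝ) : ℝ :=
  deriv (fun t => f (p.1, t)) p.2

/-- The spacetime solution `u₁` of Example 4.1; `p = (ξ, τ)`. -/
noncomputable def U1 : ℝ × ℝ → ℝ := fun p =>
  ((5 * p.1 - 5 * p.2 + 10) * Real.sqrt (4 + 2 * p.1 + 2 * p.2)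
    - (8 + 4 * p.1) * Real.sqrt (4 + 2 * p.1 - 2 * p.2)) /
    (2 * Real.sqrt (4 + 2 * p.1 - 2 * p.2))

/-- The spacetime solution `u₂` of Example 4.1; `p = (ξ, τ)`. -/
noncomputable def U2 : ℝ × ℝ → ℝ := fun p =>
  ((3 * p.2 - 3 * p.1 - 6) * Real.sqrt (4 + 2 * p.1 + 2 * p.2)
    + 8 * Real.sqrt (4 + 2 * p.1 - 2 * p.2)) /
    (2 * Real.sqrt (4 + 2 * p.1 - 2 * p.2))

open Filter Topology

section PartialDerivatives

variable {f g : ℝ × ℝ → ℝ} {p : ℝ × ℝ}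

theorem pdXi_eventuallyEq (h : f =ᶠ[𝓝 p] g) : pdXi f =ᶠ[𝓝 p] pdXi g :=
  h.eventuallyEq_nhds.mono fun q hq =>
    (hq.comp_tendsto ((Continuous.prodMk_left q.2).tendsto q.1)).deriv_eq

theorem pdTau_eventuallyEq (h : f =ᶠ[𝓝 p] g) : pdTau f =ᶠ[𝓝 p] pdTau g :=
  h.eventuallyEq_nhds.mono fun q hq =>
    (hq.comp_tendsto ((Continuous.prodMk_right q.1).tendsto q.2)).deriv_eq

end PartialDerivatives

noncomputable def rho (p : ℝ × ℝ) : ℝ := √((4 + 2 * p.1) ^ 2 - 4 * p.2 ^ 2)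

noncomputable def rhoAffine (c d e : ℝ) (p : ℝ × ℝ) : ℝ := c * rho p + d * p.1 + e

section Rho

variable {p : ℝ × ℝ}

theorem continuous_rho : Continuous rho := by
  unfold rho; fun_prop

theorem rho_sq (hp : 0 < rho p) : rho p ^ 2 = (4 + 2 * p.1) ^ 2 - 4 * p.2 ^ 2 :=
  Real.sq_sqrt (Real.sqrt_pos.mp hp).le

theorem eventually_pos_rho (hp : 0 < rho p) : ∀ᶠ q in 𝓝 p, 0 < rho q :=
  (isOpen_lt continuous_const continuous_rho).mem_nhds hp

theorem hasDerivAt_rho_xi (hp : 0 < rho p) :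
    HasDerivAt (fun x => rho (x, p.2)) (2 * (4 + 2 * p.1) / rho p) p.1 := by
  have hQ : HasDerivAt (fun x => (4 + 2 * x) ^ 2 - 4 * p.2 ^ 2) (4 * (4 + 2 * p.1)) p.1 :=
    ((((hasDerivAt_id p.1).const_mul 2).const_add 4).pow 2).sub_const (4 * p.2 ^ 2)
      |>.congr_deriv (by simp; ring)
  refine (hQ.sqrt (Real.sqrt_pos.mp hp).ne').congr_deriv ?_
  change _ / (2 * rho p) = _
  field_simp; ring

theorem hasDerivAt_rho_tau (hp : 0 < rho p) :
    HasDerivAt (fun t => rho (p.1, t)) (-4 * p.2 / rho p) p.2 := by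
  have hQ : HasDerivAt (fun t => (4 + 2 * p.1) ^ 2 - 4 * t ^ 2) (-(8 * p.2)) p.2 :=
    ((hasDerivAt_pow 2 p.2).const_mul 4).const_sub ((4 + 2 * p.1) ^ 2)
      |>.congr_deriv (by simp; ring)
  refine (hQ.sqrt (Real.sqrt_pos.mp hp).ne').congr_deriv ?_
  change _ / (2 * rho p) = _
  field_simp; ring

end Rho

section RhoAffine

variable (c d e : ℝ) {p : ℝ × ℝ}

theorem pdXi_rhoAffine (hp : 0 < rho p) :
    pdXi (rhoAffine c d e) p = c * (2 * (4 + 2 * p.1) / rho p) + d :=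
  ((((hasDerivAt_rho_xi hp).const_mul c).add ((hasDerivAt_id p.1).const_mul d)).add_const e
    |>.congr_deriv (by simp)).deriv

theorem pdTau_rhoAffine (hp : 0 < rho p) :
    pdTau (rhoAffine c d e) p = c * (-4 * p.2 / rho p) :=
  (((hasDerivAt_rho_tau hp).const_mul c).add_const (d * p.1)).add_const e |>.deriv

theorem pdXi_pdXi_rhoAffine (hp : 0 < rho p) :
    pdXi (pdXi (rhoAffine c d e)) p = c * (-16 * p.2 ^ 2 / rho p ^ 3) := by
  have hfirst : pdXi (rhoAffine c d e) =ᶠ[𝓝 p]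
      fun q => c * (2 * (4 + 2 * q.1) / rho q) + d :=
    (eventually_pos_rho hp).mono fun q hq => pdXi_rhoAffine c d e hq
  rw [(pdXi_eventuallyEq hfirst).eq_of_nhds]
  have hnum : HasDerivAt (fun x : ℝ => 2 * (4 + 2 * x)) 4 p.1 :=
    ((hasDerivAt_id p.1).const_mul 2).const_add 4 |>.const_mul 2 |>.congr_deriv (by simp; ring)
  refine ((hnum.div (hasDerivAt_rho_xi hp) hp.ne').const_mul c |>.add_const d
    |>.congr_deriv ?_).deriv
  rw [Prod.mk.eta]
  field_simp
  linear_combination 4 * c * rho_sq hp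

theorem pdTau_pdTau_rhoAffine (hp : 0 < rho p) :
    pdTau (pdTau (rhoAffine c d e)) p = c * (-4 * (4 + 2 * p.1) ^ 2 / rho p ^ 3) := by
  have hfirst : pdTau (rhoAffine c d e) =ᶠ[𝓝 p] fun q => c * (-4 * q.2 / rho q) :=
    (eventually_pos_rho hp).mono fun q hq => pdTau_rhoAffine c d e hq
  rw [(pdTau_eventuallyEq hfirst).eq_of_nhds]
  have hnum : HasDerivAt (fun t : ℝ => -4 * t) (-4) p.2 :=
    (hasDerivAt_id p.2).const_mul (-4) |>.congr_deriv (by simp)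
  refine ((hnum.div (hasDerivAt_rho_tau hp) hp.ne').const_mul c |>.congr_deriv ?_).deriv
  rw [Prod.mk.eta]
  field_simp
  linear_combination -c * rho_sq hp

theorem wave_rhoAffine (hp : 0 < rho p) :
    pdTau (pdTau (rhoAffine c d e)) p - pdXi (pdXi (rhoAffine c d e)) p = -4 * c / rho p := by
  rw [pdTau_pdTau_rhoAffine c d e hp, pdXi_pdXi_rhoAffine c d e hp]
  field_simp
  linear_combination 4 * c * rho_sq hp

end RhoAffine

def spacetimeDomain : Set (ℝ × ℝ) := {p | 0 < 4 + 2 * p.1 + 2 * p.2 ∧ 0 < 4 + 2 * p.1 - 2 * p.2}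

section SpacetimeDomain

variable {p : ℝ × ℝ}

theorem isOpen_spacetimeDomain : IsOpen spacetimeDomain := by
  have hplus : Continuous fun p : ℝ × ℝ => 4 + 2 * p.1 + 2 * p.2 := by fun_prop
  have hminus : Continuous fun p : ℝ × ℝ => 4 + 2 * p.1 - 2 * p.2 := by fun_prop
  exact (isOpen_lt continuous_const hplus).inter (isOpen_lt continuous_const hminus)

theorem rho_eq_sqrt_mul_sqrt (hp : p ∈ spacetimeDomain) :
    rho p = √(4 + 2 * p.1 + 2 * p.2) * √(4 + 2 * p.1 - 2 * p.2) := by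
  rw [rho, ← Real.sqrt_mul hp.1.le]
  ring_nf

theorem rho_pos (hp : p ∈ spacetimeDomain) : 0 < rho p := by
  rw [rho_eq_sqrt_mul_sqrt hp]
  exact mul_pos (Real.sqrt_pos.mpr hp.1) (Real.sqrt_pos.mpr hp.2)

theorem U1_eventuallyEq_rhoAffine (hp : p ∈ spacetimeDomain) :
    U1 =ᶠ[𝓝 p] rhoAffine (5 / 4) (-2) (-4) := by
  filter_upwards [isOpen_spacetimeDomain.mem_nhds hp] with q hq
  have hb : √(4 + 2 * q.1 - 2 * q.2) ^ 2 = 4 + 2 * q.1 - 2 * q.2 := Real.sq_sqrt hq.2.le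
  have hb' : √(4 + 2 * q.1 - 2 * q.2) ≠ 0 := (Real.sqrt_pos.mpr hq.2).ne'
  simp only [U1, rhoAffine, rho_eq_sqrt_mul_sqrt hq]
  rw [div_eq_iff (mul_ne_zero two_ne_zero hb')]
  linear_combination (-5 / 2 * √(4 + 2 * q.1 + 2 * q.2)) * hb

theorem U2_eventuallyEq_rhoAffine (hp : p ∈ spacetimeDomain) :
    U2 =ᶠ[𝓝 p] rhoAffine (-3 / 4) 0 4 := by
  filter_upwards [isOpen_spacetimeDomain.mem_nhds hp] with q hq
  have hb : √(4 + 2 * q.1 - 2 * q.2) ^ 2 = 4 + 2 * q.1 - 2 * q.2 := Real.sq_sqrt hq.2.le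
  have hb' : √(4 + 2 * q.1 - 2 * q.2) ≠ 0 := (Real.sqrt_pos.mpr hq.2).ne'
  simp only [U2, rhoAffine, rho_eq_sqrt_mul_sqrt hq]
  rw [div_eq_iff (mul_ne_zero two_ne_zero hb')]
  linear_combination (3 / 2 * √(4 + 2 * q.1 + 2 * q.2)) * hb

end SpacetimeDomain

theorem rho_mk_zero {ξ : ℝ} (hξ : -2 ≤ ξ) : rho (ξ, 0) = 4 + 2 * ξ := by
  rw [rho, show (4 + 2 * ξ) ^ 2 - 4 * (0 : ℝ) ^ 2 = (4 + 2 * ξ) ^ 2 by ring,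
    Real.sqrt_sq (by linarith)]

/-- `(U1, U2)` satisfies the spacetime wave map system on
`Ω = {4 + 2ξ + 2τ > 0, 4 + 2ξ − 2τ > 0}` wherever `U1 ≠ 0`, together with the
real-analytic initial conditions of Example 4.1 along `τ = 0` for `ξ > −2`. -/
theorem example41_spacetime_solution :
    (∀ p : ℝ × ℝ, 0 < 4 + 2 * p.1 + 2 * p.2 → 0 < 4 + 2 * p.1 - 2 * p.2 → U1 p ≠ 0 →
      pdTau (pdTau U1) p - pdXi (pdXi U1) p =
        (1 / (2 * U1 p)) *
          ((pdTau U1 p) ^ 2 + (pdTau U2 p) ^ 2 - (pdXi U1 p) ^ 2 - (pdXi U2 p) ^ 2) ∧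
      pdTau (pdTau U2) p - pdXi (pdXi U2) p =
        (1 / U1 p) * (pdTau U1 p * pdTau U2 p - pdXi U1 p * pdXi U2 p)) ∧
    (∀ ξ : ℝ, -2 < ξ →
      U1 (ξ, 0) = 1 + ξ / 2 ∧ U2 (ξ, 0) = 1 - (3 / 2) * ξ ∧
      pdTau U1 (ξ, 0) = 0 ∧ pdTau U2 (ξ, 0) = 0) := by
  refine ⟨fun p ha hb hU1 => ?_, fun ξ hξ => ?_⟩
  · have hp : p ∈ spacetimeDomain := ⟨ha, hb⟩
    have hρ := rho_pos hp
    have h1 := U1_eventuallyEq_rhoAffine hp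
    have h2 := U2_eventuallyEq_rhoAffine hp
    rw [h1.eq_of_nhds, rhoAffine] at hU1 ⊢
    rw [(pdTau_eventuallyEq (pdTau_eventuallyEq h1)).eq_of_nhds,
      (pdXi_eventuallyEq (pdXi_eventuallyEq h1)).eq_of_nhds,
      (pdTau_eventuallyEq (pdTau_eventuallyEq h2)).eq_of_nhds,
      (pdXi_eventuallyEq (pdXi_eventuallyEq h2)).eq_of_nhds,
      (pdTau_eventuallyEq h1).eq_of_nhds, (pdXi_eventuallyEq h1).eq_of_nhds,
      (pdTau_eventuallyEq h2).eq_of_nhds, (pdXi_eventuallyEq h2).eq_of_nhds,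
      wave_rhoAffine _ _ _ hρ, wave_rhoAffine _ _ _ hρ, pdTau_rhoAffine _ _ _ hρ,
      pdXi_rhoAffine _ _ _ hρ, pdTau_rhoAffine _ _ _ hρ, pdXi_rhoAffine _ _ _ hρ]
    constructor
    · rw [eq_comm, one_div_mul_eq_div, div_eq_iff (mul_ne_zero two_ne_zero hU1)]
      field_simp
      linear_combination 136 * rho_sq hρ
    · rw [eq_comm, one_div_mul_eq_div, div_eq_iff hU1]
      field_simp
      linear_combination -60 * rho_sq hρ
  · have hp : (ξ, (0 : ℝ)) ∈ spacetimeDomain := ⟨by simp; linarith, by simp; linarith⟩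
    have hρ := rho_pos hp
    have h1 := U1_eventuallyEq_rhoAffine hp
    have h2 := U2_eventuallyEq_rhoAffine hp
    rw [h1.eq_of_nhds, h2.eq_of_nhds, (pdTau_eventuallyEq h1).eq_of_nhds,
      (pdTau_eventuallyEq h2).eq_of_nhds, pdTau_rhoAffine _ _ _ hρ, pdTau_rhoAffine _ _ _ hρ,
      rhoAffine, rhoAffine, rho_mk_zero hξ.le]
    refine ⟨by ring, by ring, by simp, by simp⟩
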